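/- arXiv:1511.03069 — 2 statements merged into one kernel-verified Lean document; each statement's English description precedes it below -/
import Mathlib

section
/- In the star graph K_{1,d}, all labelings whose support has an odd number of connected components are equivalent to each other under Reeder's moves. -/
/-- Reeder's move `T_i`. -/
def move {V : Type} [Fintype V] [DecidableEq V] (D : SimpleGraph V) [DecidableRel D.Adj]
    (i : V) (a : V → ZMod 2) : V → ZMod 2 :=
  fun j => if j = i then a i + ∑ k ∈ D.neighborFinset i, a k else a j

/-- One step of Reeder's game: apply some move. -/
def reederStep {V : Type} [Fintype V] [DecidableEq V] (D : SimpleGraph V)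
    [DecidableRel D.Adj] (a b : V → ZMod 2) : Prop :=
  ∃ i, b = move D i a

/-- Equivalence of labelings: a finite sequence of moves. -/
def reederEquiv {V : Type} [Fintype V] [DecidableEq V] (D : SimpleGraph V)
    [DecidableRel D.Adj] : (V → ZMod 2) → (V → ZMod 2) → Prop :=
  Relation.ReflTransGen (reederStep D)

/-- Number of connected components of the support of a labeling. -/
noncomputable def numComponents {V : Type} [Fintype V] (D : SimpleGraph V)
    (a : V → ZMod 2) : ℕ :=
  Nat.card (D.induce {v | a v = 1}).ConnectedComponent

/-- The star graph `K_{1,d}`: center `0` adjacent to `d` leaves. -/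
def starG (d : ℕ) : SimpleGraph (Fin (d + 1)) where
  Adj i j := (i = 0 ∧ j ≠ 0) ∨ (j = 0 ∧ i ≠ 0)
  symm := ⟨by intro i j h; tauto⟩
  loopless := ⟨by intro i h; tauto⟩

instance (d : ℕ) : DecidableRel (starG d).Adj :=
  fun i j => inferInstanceAs (Decidable ((i = 0 ∧ j ≠ 0) ∨ (j = 0 ∧ i ≠ 0)))

/-!
Every labeling with an odd number of support components is equivalent to the labeling
`Pi.single 0 1` supported on the center; since moves are involutions, equivalence is symmetric.
If the center is labeled `1`, each leaf labeled `1` is cleared by its own move. If the center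
is labeled `0`, the support consists of isolated leaves, so their number is odd, and the move
at the center turns the center label into `1`.
-/

open scoped Finset

lemma ZMod.two_eq_zero_or_eq_one (x : ZMod 2) : x = 0 ∨ x = 1 := by
  revert x; decide

lemma ZMod.sum_two_eq_card_filter_eq_one {ι : Type*} [Fintype ι] (a : ι → ZMod 2) :
    ∑ i, a i = (#{i | a i = 1} : ZMod 2) := by
  rw [Finset.natCast_card_filter]
  refine Finset.sum_congr rfl fun i _ => ?_
  rcases ZMod.two_eq_zero_or_eq_one (a i) with h | h <;> simp [h]

lemma SimpleGraph.card_connectedComponent_bot {V : Type*} :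
    Nat.card (⊥ : SimpleGraph V).ConnectedComponent = Nat.card V :=
  (Nat.card_eq_of_bijective _
    ⟨fun _ _ h => reachable_bot.mp (ConnectedComponent.eq.mp h),
      fun c => c.exists_rep⟩).symm

section Reeder

variable {V : Type} [Fintype V] [DecidableEq V] (D : SimpleGraph V) [DecidableRel D.Adj]

lemma move_involutive (i : V) : Function.Involutive (move D i) := by
  intro a
  have h_nbr : ∀ k ∈ D.neighborFinset i, move D i a k = a k := fun k hk =>
    if_neg (D.ne_of_adj ((D.mem_neighborFinset i k).mp hk)).symm
  funext j
  by_cases hj : j = i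
  · subst hj
    have h_self : move D j a j = a j + ∑ k ∈ D.neighborFinset j, a k := if_pos rfl
    calc move D j (move D j a) j
        = move D j a j + ∑ k ∈ D.neighborFinset j, move D j a k := if_pos rfl
      _ = a j := by
        rw [Finset.sum_congr rfl h_nbr, h_self, add_assoc, CharTwo.add_self_eq_zero, add_zero]
  · simp [move, hj]

lemma reederEquiv_symm {a b : V → ZMod 2} (h : reederEquiv D a b) : reederEquiv D b a := by
  have : Std.Symm (reederStep D) := ⟨fun a _ ⟨i, hb⟩ => ⟨i, by rw [hb, move_involutive]⟩⟩
  exact Relation.ReflTransGen.stdSymm.symm _ _ h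

end Reeder

namespace starG

variable {d : ℕ}

lemma neighborFinset_zero : (starG d).neighborFinset 0 = Finset.univ.erase 0 := by
  ext k
  rw [SimpleGraph.mem_neighborFinset]
  simp [starG]

lemma neighborFinset_of_ne_zero {j : Fin (d + 1)} (hj : j ≠ 0) :
    (starG d).neighborFinset j = {0} := by
  ext k
  rw [SimpleGraph.mem_neighborFinset]
  simp [starG, hj]

lemma move_zero (a : Fin (d + 1) → ZMod 2) :
    move (starG d) 0 a = Function.update a 0 (∑ k, a k) := by
  funext j
  rw [move, neighborFinset_zero, Finset.add_sum_erase _ _ (Finset.mem_univ 0)]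
  by_cases hj : j = 0 <;> simp [hj]

lemma move_of_ne_zero {j : Fin (d + 1)} (hj : j ≠ 0) (a : Fin (d + 1) → ZMod 2) :
    move (starG d) j a = Function.update a j (a j + a 0) := by
  funext k
  rw [move, neighborFinset_of_ne_zero hj, Finset.sum_singleton]
  by_cases hk : k = j <;> simp [hk]

lemma numComponents_of_apply_zero_eq_zero {a : Fin (d + 1) → ZMod 2} (h0 : a 0 = 0) :
    numComponents (starG d) a = #{v | a v = 1} := by
  have h_bot : (starG d).induce {v | a v = 1} = ⊥ := by
    ext ⟨u, hu⟩ ⟨v, hv⟩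
    simp only [SimpleGraph.comap_adj, SimpleGraph.bot_adj, iff_false, starG]
    rintro (⟨rfl, -⟩ | ⟨rfl, -⟩) <;> simp_all
  rw [numComponents, h_bot, SimpleGraph.card_connectedComponent_bot, Nat.card_eq_fintype_card,
    Fintype.card_subtype]
  rfl

lemma reederEquiv_update_leaf {a : Fin (d + 1) → ZMod 2} (h0 : a 0 = 1) {j : Fin (d + 1)}
    (hj : j ≠ 0) : reederEquiv (starG d) a (Function.update a j 0) := by
  rcases ZMod.two_eq_zero_or_eq_one (a j) with h | h
  · rw [Function.update_eq_self_iff.mpr h.symm]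
    exact Relation.ReflTransGen.refl
  · refine Relation.ReflTransGen.single ⟨j, ?_⟩
    rw [move_of_ne_zero hj, h, h0]
    rfl

lemma reederEquiv_single_of_apply_zero_eq_one {a : Fin (d + 1) → ZMod 2} (h0 : a 0 = 1) :
    reederEquiv (starG d) a (Pi.single 0 1) := by
  suffices key : ∀ s : Finset (Fin (d + 1)), ∀ a : Fin (d + 1) → ZMod 2, a 0 = 1 →
      (∀ v ≠ 0, v ∉ s → a v = 0) → reederEquiv (starG d) a (Pi.single 0 1) from
    key Finset.univ a h0 fun v _ hv => absurd (Finset.mem_univ v) hv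
  intro s
  induction s using Finset.induction_on with
  | empty =>
    intro a h0 h_leaves
    have : a = Pi.single 0 1 := by
      funext v
      by_cases hv : v = 0
      · simp [hv, h0]
      · simp [hv, h_leaves v hv (Finset.notMem_empty v)]
    exact this ▸ Relation.ReflTransGen.refl
  | insert j s _ ih =>
    intro a h0 h_leaves
    by_cases hj : j = 0
    · subst hj
      exact ih a h0 fun v hv hvs => h_leaves v hv (by simp [hv, hvs])
    · refine (reederEquiv_update_leaf h0 hj).trans (ih _ ?_ fun v hv hvs => ?_)
      · rwa [Function.update_of_ne (Ne.symm hj)]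
      · by_cases hvj : v = j
        · simp [hvj]
        · rw [Function.update_of_ne hvj]
          exact h_leaves v hv (by simp [hvj, hvs])

lemma reederEquiv_single_of_odd {a : Fin (d + 1) → ZMod 2}
    (ha : Odd (numComponents (starG d) a)) : reederEquiv (starG d) a (Pi.single 0 1) := by
  rcases ZMod.two_eq_zero_or_eq_one (a 0) with h0 | h0
  · rw [numComponents_of_apply_zero_eq_zero h0] at ha
    have h_sum : ∑ k, a k = 1 := by
      rw [ZMod.sum_two_eq_card_filter_eq_one, ZMod.natCast_eq_one_iff_odd]
      exact ha
    refine Relation.ReflTransGen.head ⟨0, rfl⟩ (reederEquiv_single_of_apply_zero_eq_one ?_)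
    simp [move_zero, h_sum]
  · exact reederEquiv_single_of_apply_zero_eq_one h0

end starG

/-- In the star graph `K_{1,d}`, all labelings whose support has an odd number of
connected components are equivalent to each other. -/
theorem starG_odd_equiv (d : ℕ) (a b : Fin (d + 1) → ZMod 2)
    (ha : Odd (numComponents (starG d) a)) (hb : Odd (numComponents (starG d) b)) :
    reederEquiv (starG d) a b :=
  (starG.reederEquiv_single_of_odd ha).trans
    (reederEquiv_symm _ (starG.reederEquiv_single_of_odd hb))
end

section
/- The number of equivalence classes of labelings of the star graph K_{1,d} under Reeder's moves equals 2^{d-1} + 1. -/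
/-!
Every move is an involution, so a labeling fixed by all moves is alone in its class, and moves
never connect a fixed labeling to a non-fixed one. On the star, a labeling is fixed exactly when
the center label and the sum of the leaf labels both vanish: two independent linear conditions,
leaving `2 ^ (d - 1)` fixed labelings. All other labelings form a single class: if the center
label is `0` then the leaf sum is `1`, so the move at the center sets the center to `1`; and once
the center is `1`, the move at a leaf toggles that leaf alone, so every leaf can be set at will.
-/

open Finset Function

theorem ZMod.eq_one_of_ne_zero {x : ZMod 2} (hx : x ≠ 0) : x = 1 :=
  Fin.eq_one_of_ne_zero x hx

section General

variable {V : Type} [Fintype V] [DecidableEq V] (D : SimpleGraph V) [DecidableRel D.Adj]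

theorem move_apply_self (i : V) (a : V → ZMod 2) :
    move D i a i = a i + ∑ k ∈ D.neighborFinset i, a k := if_pos rfl

theorem move_apply_of_ne {i j : V} (a : V → ZMod 2) (h : j ≠ i) : move D i a j = a j := if_neg h

theorem move_eq_update (i : V) (a : V → ZMod 2) :
    move D i a = update a i (a i + ∑ k ∈ D.neighborFinset i, a k) := by
  ext j
  by_cases h : j = i
  · subst h
    rw [move_apply_self, update_self]
  · rw [move_apply_of_ne D a h, update_of_ne h]

theorem move_eq_self_iff (i : V) (a : V → ZMod 2) :
    move D i a = a ↔ ∑ k ∈ D.neighborFinset i, a k = 0 := by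
  rw [move_eq_update, update_eq_self_iff, add_eq_left]

theorem move_move (i : V) (a : V → ZMod 2) : move D i (move D i a) = a := by
  have hsum : ∑ k ∈ D.neighborFinset i, move D i a k = ∑ k ∈ D.neighborFinset i, a k :=
    sum_congr rfl fun k hk =>
      move_apply_of_ne D a (D.ne_of_adj ((D.mem_neighborFinset i k).1 hk)).symm
  rw [move_eq_update D i (move D i a), hsum, move_apply_self, add_assoc, CharTwo.add_self_eq_zero,
    add_zero, move_eq_update D i a, update_idem, update_eq_self]

def IsFixedLabeling (a : V → ZMod 2) : Prop := ∀ i, move D i a = a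

variable {D} in
theorem eq_of_reederStep_of_isFixedLabeling {a b : V → ZMod 2} (h : reederStep D a b)
    (hab : IsFixedLabeling D a ∨ IsFixedLabeling D b) : a = b := by
  obtain ⟨i, rfl⟩ := h
  rcases hab with ha | hb
  · exact (ha i).symm
  · rw [← hb i, move_move]

end General

theorem Nat.card_quot_eq_card_add_one {α : Type*} [Finite α] {r : α → α → Prop}
    (P : α → Prop) (hr : ∀ a b, r a b → P a ∨ P b → a = b)
    (hconn : ∀ a b, ¬P a → ¬P b → Quot.mk r a = Quot.mk r b) {c : α} (hc : ¬P c) :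
    Nat.card (Quot r) = Nat.card {a // P a} + 1 := by
  classical
  let cls : α → Option {a // P a} := fun a => if h : P a then some ⟨a, h⟩ else none
  have hcls : ∀ a b, r a b → cls a = cls b := fun a b hab => by
    by_cases h : P a ∨ P b
    · rw [hr a b hab h]
    · push Not at h
      simp [cls, h.1, h.2]
  let e : Quot r ≃ Option {a // P a} :=
    { toFun := Quot.lift cls hcls
      invFun := fun o => o.elim (Quot.mk r c) fun a => Quot.mk r a
      left_inv := fun q => by
        induction q using Quot.ind with | _ a =>
        by_cases h : P a
        · simp [cls, h]
        · simpa [cls, h] using hconn c a hc h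
      right_inv := fun o => by
        rcases o with _ | ⟨a, h⟩
        · simp [cls, hc]
        · simp [cls, h] }
  rw [Nat.card_congr e, Finite.card_option]

theorem AddMonoidHom.card_ker_mul_card_of_surjective {G H : Type*} [AddGroup G] [AddGroup H]
    {f : G →+ H} (hf : Surjective f) : Nat.card f.ker * Nat.card H = Nat.card G := by
  rw [← AddSubgroup.card_mul_index f.ker, AddSubgroup.index_ker, AddMonoidHom.range_eq_top.2 hf,
    AddSubgroup.card_top]

section Star

variable {d : ℕ}

theorem neighborFinset_starG_zero : (starG d).neighborFinset 0 = univ.erase 0 := by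
  ext j
  rw [SimpleGraph.mem_neighborFinset]
  simp [starG]

theorem neighborFinset_starG_of_ne_zero {i : Fin (d + 1)} (hi : i ≠ 0) :
    (starG d).neighborFinset i = {0} := by
  ext j
  rw [SimpleGraph.mem_neighborFinset]
  simp [starG, hi]

theorem move_starG_of_ne_zero {i : Fin (d + 1)} (hi : i ≠ 0) (a : Fin (d + 1) → ZMod 2) :
    move (starG d) i a = update a i (a i + a 0) := by
  rw [move_eq_update, neighborFinset_starG_of_ne_zero hi, sum_singleton]

variable (d) in
def starConstraints : (Fin (d + 1) → ZMod 2) →+ ZMod 2 × ZMod 2 :=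
  AddMonoidHom.mk' (fun a => (a 0, ∑ k ∈ univ.erase 0, a k)) fun a b => by
    simp [sum_add_distrib]

theorem starConstraints_eq_zero_iff (a : Fin (d + 1) → ZMod 2) :
    starConstraints d a = 0 ↔ a 0 = 0 ∧ ∑ k ∈ univ.erase 0, a k = 0 :=
  Prod.ext_iff

theorem isFixedLabeling_starG_iff [NeZero d] (a : Fin (d + 1) → ZMod 2) :
    IsFixedLabeling (starG d) a ↔ starConstraints d a = 0 := by
  simp only [IsFixedLabeling, move_eq_self_iff, starConstraints_eq_zero_iff]
  constructor
  · intro h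
    have hleaf := h 1
    rw [neighborFinset_starG_of_ne_zero (Fin.one_pos'.ne'), sum_singleton] at hleaf
    exact ⟨hleaf, neighborFinset_starG_zero (d := d) ▸ h 0⟩
  · rintro ⟨hcenter, hleaves⟩ i
    rcases eq_or_ne i 0 with rfl | hi
    · rwa [neighborFinset_starG_zero]
    · rwa [neighborFinset_starG_of_ne_zero hi, sum_singleton]

theorem starConstraints_surjective [NeZero d] : Surjective (starConstraints d) := by
  rintro ⟨x, y⟩
  refine ⟨Pi.single 0 x + Pi.single 1 y, ?_⟩
  simp [starConstraints, sum_add_distrib]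

theorem card_isFixedLabeling_starG [NeZero d] :
    Nat.card {a // IsFixedLabeling (starG d) a} = 2 ^ (d - 1) := by
  have hker := (starConstraints d).card_ker_mul_card_of_surjective starConstraints_surjective
  simp only [Nat.card_prod, Nat.card_pi, Nat.card_zmod, prod_const, card_univ, Fintype.card_fin]
    at hker
  have hpow : 2 ^ (d + 1) = 2 ^ (d - 1) * (2 * 2) := by
    rw [← pow_two, ← pow_add]
    congr 1
    have := NeZero.ne d
    omega
  rw [Nat.card_congr (Equiv.subtypeEquivRight fun a =>
    (isFixedLabeling_starG_iff a).trans (starConstraints d).mem_ker.symm)]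
  omega

theorem mk_update_eq_mk {a : Fin (d + 1) → ZMod 2} (ha : a 0 = 1) {i : Fin (d + 1)} {x : ZMod 2}
    (hx : i = 0 → x = 1) : Quot.mk (reederStep (starG d)) (update a i x) = Quot.mk _ a := by
  rcases eq_or_ne i 0 with rfl | hi
  · rw [hx rfl, ← ha, update_eq_self]
  obtain rfl | rfl : x = a i ∨ x = a i + 1 := by
    by_cases h : x = a i
    · exact .inl h
    · exact .inr (eq_add_of_sub_eq' (ZMod.eq_one_of_ne_zero (sub_ne_zero.2 h)))
  · rw [update_eq_self]
  · rw [← ha, ← move_starG_of_ne_zero hi]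
    exact (Quot.sound ⟨i, rfl⟩).symm

theorem mk_eq_mk_of_apply_zero_eq_one {a b : Fin (d + 1) → ZMod 2} (ha : a 0 = 1) (hb : b 0 = 1) :
    Quot.mk (reederStep (starG d)) a = Quot.mk _ b := by
  suffices key : ∀ s : Finset (Fin (d + 1)), ∀ a : Fin (d + 1) → ZMod 2, a 0 = 1 →
      (∀ j ∉ s, a j = b j) → Quot.mk (reederStep (starG d)) a = Quot.mk _ b from
    key univ a ha fun j hj => absurd (mem_univ j) hj
  intro s
  induction s using Finset.induction_on with
  | empty =>
    intro a _ hab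
    rw [funext fun j => hab j (notMem_empty j)]
  | insert i s _ ih =>
    intro a ha hab
    rw [← mk_update_eq_mk ha (i := i) (x := b i) fun hi => by rwa [hi]]
    refine ih _ ?_ fun j hj => ?_
    · rcases eq_or_ne i 0 with rfl | hi
      · rwa [update_self]
      · rwa [update_of_ne hi.symm]
    · rcases eq_or_ne j i with rfl | hji
      · rw [update_self]
      · rw [update_of_ne hji, hab j (by simp [hji, hj])]

theorem exists_mk_eq_mk_apply_zero_eq_one [NeZero d] {a : Fin (d + 1) → ZMod 2}
    (ha : ¬IsFixedLabeling (starG d) a) :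
    ∃ b, Quot.mk (reederStep (starG d)) a = Quot.mk _ b ∧ b 0 = 1 := by
  rw [isFixedLabeling_starG_iff, starConstraints_eq_zero_iff] at ha
  by_cases hcenter : a 0 = 0
  · refine ⟨move (starG d) 0 a, Quot.sound ⟨0, rfl⟩, ?_⟩
    have hleaves : ∑ k ∈ univ.erase 0, a k = 1 :=
      ZMod.eq_one_of_ne_zero fun h => ha ⟨hcenter, h⟩
    rw [move_apply_self, neighborFinset_starG_zero, hcenter, hleaves, zero_add]
  · exact ⟨a, rfl, ZMod.eq_one_of_ne_zero hcenter⟩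

theorem mk_eq_mk_of_not_isFixedLabeling [NeZero d] {a b : Fin (d + 1) → ZMod 2}
    (ha : ¬IsFixedLabeling (starG d) a) (hb : ¬IsFixedLabeling (starG d) b) :
    Quot.mk (reederStep (starG d)) a = Quot.mk _ b := by
  obtain ⟨a', haa', ha'⟩ := exists_mk_eq_mk_apply_zero_eq_one ha
  obtain ⟨b', hbb', hb'⟩ := exists_mk_eq_mk_apply_zero_eq_one hb
  rw [haa', hbb', mk_eq_mk_of_apply_zero_eq_one ha' hb']

end Star

/-- The number of equivalence classes of labelings of the star graph `K_{1,d}` under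
Reeder's moves equals `2^(d-1) + 1`. -/
theorem starG_card_classes (d : ℕ) (hd : 1 ≤ d) :
    Nat.card (Quot (reederStep (starG d))) = 2 ^ (d - 1) + 1 := by
  have : NeZero d := ⟨by omega⟩
  have hsingle : ¬IsFixedLabeling (starG d) (Pi.single 0 1) := by
    simp [isFixedLabeling_starG_iff, starConstraints_eq_zero_iff]
  rw [Nat.card_quot_eq_card_add_one _ (fun _ _ => eq_of_reederStep_of_isFixedLabeling)
    (fun _ _ => mk_eq_mk_of_not_isFixedLabeling) hsingle, card_isFixedLabeling_starG]
end
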